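/- arXiv:2403.11687 — 3 statements merged into one kernel-verified Lean document; each statement's English description precedes it below -/
import Mathlib

section
/- Global excess bound for the selection derivative of a continuous selection of Lipschitz-smooth maps (the definability-free inequality established in the proof of Lemma 2.5): let U ⊆ ℝ^p be a nonempty open set, let F₁, …, F_r : U → ℝ^d be differentiable maps whose derivatives x ↦ F_i′(x) ∈ ℝ^{d×p} are L-Lipschitz on U (in operator norm), and let F : U → ℝ^d be a continuous map such that F(y) ∈ {F₁(y), …, F_r(y)} for every y ∈ U. For x ∈ U set I_F(x) := {i : F_i(x) = F(x)}, D^s F(x) := conv{F_i′(x) : i ∈ I_F(x)}, and M_x := max_{i∈{1,…,r}} min_{j∈I_F(x)} ‖F_i′(x) − F_j′(x)‖. Then for all x, x′ ∈ U: gap(D^s F(x′), D^s F(x)) ≤ M_x + L‖x′ − x‖. -/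
/-- The excess (gap) of a set `𝒜` over a set `ℬ` in a normed additive group:
`gap 𝒜 ℬ = sup_{A ∈ 𝒜} inf_{B ∈ ℬ} ‖A - B‖`. -/
noncomputable def gap {E : Type*} [NormedAddCommGroup E] (𝒜 ℬ : Set E) : ℝ :=
  ⨆ A : 𝒜, ⨅ B : ℬ, ‖(A : E) - (B : E)‖

/-- Global excess bound for the selection derivative of a continuous selection of
Lipschitz-smooth maps: for all `x, x' ∈ U`,
`gap(D^s F(x'), D^s F(x)) ≤ M_x + L‖x' − x‖`, where
`D^s F(x) = conv{F_i'(x) : i ∈ I_F(x)}` and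
`M_x = max_i min_{j ∈ I_F(x)} ‖F_i'(x) − F_j'(x)‖`. -/
theorem gap_selection_derivative_le {p d r : ℕ}
    (U : Set (EuclideanSpace ℝ (Fin p))) (hUopen : IsOpen U) (hUne : U.Nonempty)
    (F : EuclideanSpace ℝ (Fin p) → EuclideanSpace ℝ (Fin d))
    (Fi : Fin r → EuclideanSpace ℝ (Fin p) → EuclideanSpace ℝ (Fin d))
    (Fi' : Fin r → EuclideanSpace ℝ (Fin p) →
      (EuclideanSpace ℝ (Fin p) →L[ℝ] EuclideanSpace ℝ (Fin d)))
    (L : ℝ) (hL : 0 ≤ L)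
    (hderiv : ∀ i, ∀ y ∈ U, HasFDerivAt (Fi i) (Fi' i y) y)
    (hlip : ∀ i, ∀ y ∈ U, ∀ y' ∈ U, ‖Fi' i y - Fi' i y'‖ ≤ L * ‖y - y'‖)
    (hFcont : ContinuousOn F U)
    (hsel : ∀ y ∈ U, ∃ i, F y = Fi i y)
    (x : EuclideanSpace ℝ (Fin p)) (hx : x ∈ U)
    (x' : EuclideanSpace ℝ (Fin p)) (hx' : x' ∈ U) :
    gap (convexHull ℝ ((fun i => Fi' i x') '' {i | Fi i x' = F x'}))
        (convexHull ℝ ((fun i => Fi' i x) '' {i | Fi i x = F x}))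
      ≤ (⨆ i : Fin r, ⨅ j : {j : Fin r | Fi j x = F x}, ‖Fi' i x - Fi' (j : Fin r) x‖)
        + L * ‖x' - x‖ := by
  classical
  obtain ⟨j₀, hj₀⟩ := hsel x hx
  set I : Set (Fin r) := {j : Fin r | Fi j x = F x} with hI
  have hj₀I : j₀ ∈ I := hj₀.symm
  haveI : Nonempty I := ⟨⟨j₀, hj₀I⟩⟩
  set S : Set (EuclideanSpace ℝ (Fin p) →L[ℝ] EuclideanSpace ℝ (Fin d)) :=
    (fun i => Fi' i x) '' I with hS
  set C := convexHull ℝ S with hC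
  have hCne : C.Nonempty := ⟨Fi' j₀ x, subset_convexHull ℝ S ⟨j₀, hj₀I, rfl⟩⟩
  haveI : Nonempty C := hCne.to_subtype
  set m : Fin r → ℝ := fun i => ⨅ j : I, ‖Fi' i x - Fi' (j : Fin r) x‖ with hm
  set M : ℝ := ⨆ i : Fin r, m i with hM
  set K : ℝ := M + L * ‖x' - x‖ with hK
  have hmnonneg : ∀ i, 0 ≤ m i := fun i => Real.iInf_nonneg fun j => norm_nonneg _
  have hmleM : ∀ i, m i ≤ M := fun i => le_ciSup (Set.Finite.bddAbove (Set.finite_range m)) i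
  have hMnonneg : 0 ≤ M := le_trans (hmnonneg j₀) (hmleM j₀)
  have hKnonneg : 0 ≤ K := add_nonneg hMnonneg (mul_nonneg hL (norm_nonneg _))
  -- key bound for generators
  have hgen : ∀ i : Fin r, Metric.infDist (Fi' i x') C ≤ K := by
    intro i
    have h1 : Metric.infDist (Fi' i x') C - L * ‖x' - x‖ ≤ m i := by
      apply le_ciInf
      rintro ⟨j, hj⟩
      have hmem : Fi' j x ∈ C := subset_convexHull ℝ S ⟨j, hj, rfl⟩
      have h2 : Metric.infDist (Fi' i x') C ≤ ‖Fi' i x' - Fi' j x‖ := by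
        simpa [dist_eq_norm] using Metric.infDist_le_dist_of_mem hmem
      have h3 : ‖Fi' i x' - Fi' j x‖ ≤ ‖Fi' i x' - Fi' i x‖ + ‖Fi' i x - Fi' j x‖ := by
        simpa using norm_sub_le_norm_sub_add_norm_sub (Fi' i x') (Fi' i x) (Fi' j x)
      have h4 : ‖Fi' i x' - Fi' i x‖ ≤ L * ‖x' - x‖ := hlip i x' hx' x hx
      linarith
    have := h1.trans (hmleM i)
    linarith
  -- conv hull of generators at x' lies in the K-cthickening of C
  have hsub : convexHull ℝ ((fun i => Fi' i x') '' {i | Fi i x' = F x'})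
      ⊆ Metric.cthickening K C := by
    apply convexHull_min _ ((convex_convexHull ℝ S).cthickening K)
    rintro A ⟨i, -, rfl⟩
    rw [Metric.mem_cthickening_iff]
    exact (ENNReal.le_ofReal_iff_toReal_le (Metric.infEdist_ne_top hCne) hKnonneg).mpr (hgen i)
  -- conclude
  rw [gap]
  apply Real.iSup_le _ hKnonneg
  rintro ⟨A, hA⟩
  have hinf : (⨅ B : C, ‖A - (B : _)‖) = Metric.infDist A C := by
    rw [Metric.infDist_eq_iInf]
    simp [dist_eq_norm]
  rw [hinf]
  have := hsub hA
  rw [Metric.mem_cthickening_iff] at this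
  calc Metric.infDist A C = (EMetric.infEdist A C).toReal := rfl
    _ ≤ (ENNReal.ofReal K).toReal := ENNReal.toReal_mono ENNReal.ofReal_ne_top this
    _ = K := ENNReal.toReal_ofReal hKnonneg
end

section
/- One-step recursion inequality for set-valued derivative iterations (the key step in the proof of Theorem 4.1): let 0 ≤ q < 1, let 𝒜, ℬ ⊆ ℝ^{d×(d+m)} be nonempty bounded sets of real block matrices with ‖𝒜₁‖_sup ≤ q, and let 𝒟, 𝒮 ⊆ ℝ^{d×m} be nonempty bounded sets. Then gap(𝒜(𝒟), ℬ(𝒮)) ≤ q · gap(𝒟, 𝒮) + (1 + ‖𝒮‖_sup) · gap(𝒜, ℬ). -/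
open scoped Matrix.Norms.L2Operator

/-- `‖𝒜‖_sup = sup_{A ∈ 𝒜} ‖A‖`. -/
noncomputable def supNorm {E : Type*} [NormedAddCommGroup E] (𝒜 : Set E) : ℝ :=
  ⨆ A : 𝒜, ‖(A : E)‖

/-- First block `A₁ ∈ ℝ^{n×p₁}` of a block matrix `A = [A₁, A₂] ∈ ℝ^{n×(p₁+p₂)}`. -/
def blk1 {n p₁ p₂ : ℕ} (A : Matrix (Fin n) (Fin (p₁ + p₂)) ℝ) :
    Matrix (Fin n) (Fin p₁) ℝ :=
  A.submatrix id (Fin.castAdd p₂)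

/-- Second block `A₂ ∈ ℝ^{n×p₂}` of a block matrix `A = [A₁, A₂] ∈ ℝ^{n×(p₁+p₂)}`. -/
def blk2 {n p₁ p₂ : ℕ} (A : Matrix (Fin n) (Fin (p₁ + p₂)) ℝ) :
    Matrix (Fin n) (Fin p₂) ℝ :=
  A.submatrix id (Fin.natAdd p₁)

/-- The affine action `𝒜(𝒳) = {A₁ X + A₂ | [A₁, A₂] ∈ 𝒜, X ∈ 𝒳}` of a set of block
matrices `𝒜 ⊆ ℝ^{n×(p₁+p₂)}` on a set of matrices `𝒳 ⊆ ℝ^{p₁×p₂}`. -/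
def affAct {n p₁ p₂ : ℕ} (𝒜 : Set (Matrix (Fin n) (Fin (p₁ + p₂)) ℝ))
    (𝒳 : Set (Matrix (Fin p₁) (Fin p₂) ℝ)) : Set (Matrix (Fin n) (Fin p₂) ℝ) :=
  {Y | ∃ A ∈ 𝒜, ∃ X ∈ 𝒳, Y = blk1 A * X + blk2 A}

/-! Subtract the two affine images termwise: `A₁X + A₂ - (B₁S + B₂) = A₁(X - S) + (A - B)₁S +
(A - B)₂`. The first term is contracted by `‖A₁‖ ≤ q`, and the other two are controlled by
`‖A - B‖` because taking a block of columns does not increase the operator norm. Choosing `S ∈ 𝒮`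
and `B ∈ ℬ` nearly optimal for `X` and `A` bounds the distance from `A₁X + A₂` to `ℬ(𝒮)`. -/

open Function Metric Bornology Set

namespace Matrix

variable {𝕜 : Type*} [RCLike 𝕜] {m n n' : Type*} [Fintype m] [Fintype n] [Fintype n']
  [DecidableEq n] [DecidableEq n']

lemma l2_opNorm_one_submatrix_le {e : n' → n} (he : Injective e) :
    ‖(1 : Matrix n n 𝕜).submatrix id e‖ ≤ 1 := by
  set P := (1 : Matrix n n 𝕜).submatrix id e
  have hP : Pᴴ * P = 1 := by
    rw [conjTranspose_submatrix, conjTranspose_one, ← submatrix_mul _ _ e id e bijective_id,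
      Matrix.one_mul, submatrix_one e he]
  have h_one : ‖(1 : Matrix n' n' 𝕜)‖ ≤ 1 := by
    rw [← diagonal_one, l2_opNorm_diagonal]
    exact (pi_norm_le_iff_of_nonneg zero_le_one).2 fun _ => norm_one.le
  have h_sq : ‖P‖ * ‖P‖ ≤ 1 := by
    rw [← l2_opNorm_conjTranspose_mul_self, hP]
    exact h_one
  nlinarith [norm_nonneg P]

lemma l2_opNorm_submatrix_le (M : Matrix m n 𝕜) {e : n' → n} (he : Injective e) :
    ‖M.submatrix id e‖ ≤ ‖M‖ := by
  have hM : M.submatrix id e = M * (1 : Matrix n n 𝕜).submatrix id e := by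
    simpa using submatrix_mul M (1 : Matrix n n 𝕜) id id e bijective_id
  calc ‖M.submatrix id e‖ ≤ ‖M‖ * ‖(1 : Matrix n n 𝕜).submatrix id e‖ := hM ▸ l2_opNorm_mul _ _
    _ ≤ ‖M‖ := mul_le_of_le_one_right (norm_nonneg M) (l2_opNorm_one_submatrix_le he)

end Matrix

section Gap

variable {E : Type*} [NormedAddCommGroup E] {𝒳 𝒴 : Set E} {X : E}

lemma gap_eq_iSup_infDist (𝒳 𝒴 : Set E) : gap 𝒳 𝒴 = ⨆ X : 𝒳, infDist (X : E) 𝒴 := by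
  simp only [gap, infDist_eq_iInf, dist_eq_norm]

lemma gap_nonneg (𝒳 𝒴 : Set E) : 0 ≤ gap 𝒳 𝒴 := by
  rw [gap_eq_iSup_infDist]
  exact Real.iSup_nonneg fun _ => infDist_nonneg

lemma infDist_le_gap (h𝒳 : IsBounded 𝒳) (h𝒴 : 𝒴.Nonempty) (hX : X ∈ 𝒳) :
    infDist X 𝒴 ≤ gap 𝒳 𝒴 := by
  obtain ⟨Y₀, hY₀⟩ := h𝒴
  obtain ⟨r, hr⟩ := h𝒳.subset_closedBall Y₀
  rw [gap_eq_iSup_infDist]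
  refine le_ciSup (f := fun X : 𝒳 => infDist (X : E) 𝒴) ⟨r, ?_⟩ ⟨X, hX⟩
  exact forall_mem_range.2 fun X => (infDist_le_dist_of_mem hY₀).trans (hr X.2)

lemma exists_norm_sub_lt_gap_add (h𝒳 : IsBounded 𝒳) (h𝒴 : 𝒴.Nonempty) (hX : X ∈ 𝒳)
    {ε : ℝ} (hε : 0 < ε) : ∃ Y ∈ 𝒴, ‖X - Y‖ < gap 𝒳 𝒴 + ε := by
  simpa only [dist_eq_norm] using
    (infDist_lt_iff h𝒴).1 ((infDist_le_gap h𝒳 h𝒴 hX).trans_lt (lt_add_of_pos_right _ hε))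

lemma gap_le_of_forall_exists_norm_sub_le {c : ℝ} (hc : 0 ≤ c)
    (h : ∀ X ∈ 𝒳, ∀ ε > 0, ∃ Y ∈ 𝒴, ‖X - Y‖ ≤ c + ε) : gap 𝒳 𝒴 ≤ c := by
  rw [gap_eq_iSup_infDist]
  refine Real.iSup_le (fun X => le_of_forall_pos_le_add fun ε hε => ?_) hc
  obtain ⟨Y, hY, hXY⟩ := h X X.2 ε hε
  exact (infDist_le_dist_of_mem hY).trans (by rwa [dist_eq_norm])

lemma supNorm_nonneg (𝒳 : Set E) : 0 ≤ supNorm 𝒳 :=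
  Real.iSup_nonneg fun _ => norm_nonneg _

lemma norm_le_supNorm (h𝒳 : IsBounded 𝒳) (hX : X ∈ 𝒳) : ‖X‖ ≤ supNorm 𝒳 := by
  obtain ⟨C, hC⟩ := isBounded_iff_forall_norm_le.1 h𝒳
  exact le_ciSup (f := fun X : 𝒳 => ‖(X : E)‖) ⟨C, forall_mem_range.2 fun X => hC X X.2⟩ ⟨X, hX⟩

end Gap

section Blocks

variable {n p₁ p₂ : ℕ}

lemma norm_blk1_le (A : Matrix (Fin n) (Fin (p₁ + p₂)) ℝ) : ‖blk1 A‖ ≤ ‖A‖ :=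
  A.l2_opNorm_submatrix_le (Fin.castAdd_injective p₁ p₂)

lemma norm_blk2_le (A : Matrix (Fin n) (Fin (p₁ + p₂)) ℝ) : ‖blk2 A‖ ≤ ‖A‖ :=
  A.l2_opNorm_submatrix_le (Fin.natAdd_injective p₂ p₁)

lemma isBounded_image_blk1 {𝒜 : Set (Matrix (Fin n) (Fin (p₁ + p₂)) ℝ)} (h𝒜 : IsBounded 𝒜) :
    IsBounded (blk1 '' 𝒜) := by
  obtain ⟨C, hC⟩ := isBounded_iff_forall_norm_le.1 h𝒜
  exact isBounded_iff_forall_norm_le.2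
    ⟨C, forall_mem_image.2 fun A hA => (norm_blk1_le A).trans (hC A hA)⟩

lemma norm_blk1_mul_add_blk2_sub_le (A B : Matrix (Fin n) (Fin (p₁ + p₂)) ℝ)
    (X S : Matrix (Fin p₁) (Fin p₂) ℝ) :
    ‖blk1 A * X + blk2 A - (blk1 B * S + blk2 B)‖ ≤
      ‖blk1 A‖ * ‖X - S‖ + (1 + ‖S‖) * ‖A - B‖ := by
  have h_split : blk1 A * X + blk2 A - (blk1 B * S + blk2 B) =
      blk1 A * (X - S) + (blk1 (A - B) * S + blk2 (A - B)) := by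
    rw [show blk1 (A - B) = blk1 A - blk1 B from rfl, show blk2 (A - B) = blk2 A - blk2 B from rfl,
      Matrix.mul_sub, Matrix.sub_mul]
    abel
  calc ‖blk1 A * X + blk2 A - (blk1 B * S + blk2 B)‖
      ≤ ‖blk1 A‖ * ‖X - S‖ + (‖blk1 (A - B)‖ * ‖S‖ + ‖blk2 (A - B)‖) := by
        rw [h_split]
        exact norm_add_le_of_le (Matrix.l2_opNorm_mul _ _)
          (norm_add_le_of_le (Matrix.l2_opNorm_mul _ _) le_rfl)
    _ ≤ ‖blk1 A‖ * ‖X - S‖ + (‖A - B‖ * ‖S‖ + ‖A - B‖) := by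
        gcongr
        exacts [norm_blk1_le _, norm_blk2_le _]
    _ = ‖blk1 A‖ * ‖X - S‖ + (1 + ‖S‖) * ‖A - B‖ := by ring

end Blocks

theorem gap_affAct_step_general {d m : ℕ} (q : ℝ)
    (𝒜 ℬ : Set (Matrix (Fin d) (Fin (d + m)) ℝ))
    (𝒟 𝒮 : Set (Matrix (Fin d) (Fin m) ℝ))
    (hℬne : ℬ.Nonempty) (h𝒮ne : 𝒮.Nonempty)
    (h𝒜b : Bornology.IsBounded 𝒜)
    (h𝒟b : Bornology.IsBounded 𝒟) (h𝒮b : Bornology.IsBounded 𝒮)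
    (h𝒜₁ : supNorm (blk1 '' 𝒜) ≤ q) :
    gap (affAct 𝒜 𝒟) (affAct ℬ 𝒮) ≤ q * gap 𝒟 𝒮 + (1 + supNorm 𝒮) * gap 𝒜 ℬ := by
  have hq : 0 ≤ q := (supNorm_nonneg _).trans h𝒜₁
  have hs : 0 ≤ supNorm 𝒮 := supNorm_nonneg 𝒮
  have hK : 0 < q + (1 + supNorm 𝒮) := by positivity
  have h_rhs : 0 ≤ q * gap 𝒟 𝒮 + (1 + supNorm 𝒮) * gap 𝒜 ℬ := by
    have := gap_nonneg 𝒟 𝒮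
    have := gap_nonneg 𝒜 ℬ
    positivity
  refine gap_le_of_forall_exists_norm_sub_le h_rhs ?_
  rintro _ ⟨A, hA, X, hX, rfl⟩ ε hε
  set δ := ε / (q + (1 + supNorm 𝒮))
  have hδ : 0 < δ := div_pos hε hK
  obtain ⟨S, hS, hXS⟩ := exists_norm_sub_lt_gap_add h𝒟b h𝒮ne hX hδ
  obtain ⟨B, hB, hAB⟩ := exists_norm_sub_lt_gap_add h𝒜b hℬne hA hδ
  refine ⟨_, ⟨B, hB, S, hS, rfl⟩, ?_⟩
  calc ‖blk1 A * X + blk2 A - (blk1 B * S + blk2 B)‖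
      ≤ ‖blk1 A‖ * ‖X - S‖ + (1 + ‖S‖) * ‖A - B‖ := norm_blk1_mul_add_blk2_sub_le A B X S
    _ ≤ q * (gap 𝒟 𝒮 + δ) + (1 + supNorm 𝒮) * (gap 𝒜 ℬ + δ) := by
        gcongr
        · exact (norm_le_supNorm (isBounded_image_blk1 h𝒜b) (mem_image_of_mem _ hA)).trans h𝒜₁
        · exact norm_le_supNorm h𝒮b hS
    _ = q * gap 𝒟 𝒮 + (1 + supNorm 𝒮) * gap 𝒜 ℬ + ε := by
        simp only [δ]
        field_simp
        ring

/-- One-step recursion inequality for set-valued derivative iterations: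
`gap(𝒜(𝒟), ℬ(𝒮)) ≤ q · gap(𝒟, 𝒮) + (1 + ‖𝒮‖_sup) · gap(𝒜, ℬ)`. -/
theorem gap_affAct_step {d m : ℕ} (q : ℝ) (hq0 : 0 ≤ q) (hq1 : q < 1)
    (𝒜 ℬ : Set (Matrix (Fin d) (Fin (d + m)) ℝ))
    (𝒟 𝒮 : Set (Matrix (Fin d) (Fin m) ℝ))
    (h𝒜ne : 𝒜.Nonempty) (hℬne : ℬ.Nonempty) (h𝒟ne : 𝒟.Nonempty) (h𝒮ne : 𝒮.Nonempty)
    (h𝒜b : Bornology.IsBounded 𝒜) (hℬb : Bornology.IsBounded ℬ)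
    (h𝒟b : Bornology.IsBounded 𝒟) (h𝒮b : Bornology.IsBounded 𝒮)
    (h𝒜₁ : supNorm (blk1 '' 𝒜) ≤ q) :
    gap (affAct 𝒜 𝒟) (affAct ℬ 𝒮) ≤ q * gap 𝒟 𝒮 + (1 + supNorm 𝒮) * gap 𝒜 ℬ :=
  gap_affAct_step_general q 𝒜 ℬ 𝒟 𝒮 hℬne h𝒮ne h𝒜b h𝒟b h𝒮b h𝒜₁
end

section
/- Variance transfer bound for the stochastic linear-system operator (established in the proof of Lemma D.3): let 0 ≤ q < 1 and σ₁′ ≥ 0. Let M be a random d×d real matrix with E[‖M‖²] < ∞, mean M̄ := E[M], and E[‖M − M̄‖²] ≤ σ₁′ (operator norm). Let G₁ ∈ ℝ^{d×d} with ‖G₁‖ ≤ 1 and ‖M̄ᵀG₁ᵀ‖ ≤ q. Fix y, v ∈ ℝ^d and set Ψ(v) := M̄ᵀG₁ᵀ v + y. Then E[‖MᵀG₁ᵀ v + y − Ψ(v)‖²] ≤ (2σ₁′/(1−q)²) · ‖Ψ(v) − v‖² + (2σ₁′/(1−q)²) · ‖y‖². -/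
/-!
Centring the integrand gives `‖(M − M̄)ᵀG₁ᵀv‖² ≤ ‖M − M̄‖²‖v‖²`, so the left side is at most
`σ₁'‖v‖²`. Since `v ↦ M̄ᵀG₁ᵀv` is a `q`-contraction, `(1 − q)‖v‖ ≤ ‖Ψ(v) − v‖ + ‖y‖`, and squaring
bounds `‖v‖²` by `2/(1 − q)² · (‖Ψ(v) − v‖² + ‖y‖²)`.
-/

open MeasureTheory Matrix

instance matrixMeasurableSpace {m n α : Type*} [MeasurableSpace α] :
    MeasurableSpace (Matrix m n α) :=
  inferInstanceAs (MeasurableSpace (m → n → α))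

instance Matrix.borelSpace {m n : Type*} [Countable m] [Countable n] :
    BorelSpace (Matrix m n ℝ) :=
  inferInstanceAs (BorelSpace (m → n → ℝ))

namespace ContinuousLinearMap

variable {E : Type*} [SeminormedAddCommGroup E] [NormedSpace ℝ E]

theorem one_sub_mul_norm_le_of_opNorm_le {L : E →L[ℝ] E} {q : ℝ} (hL : ‖L‖ ≤ q) (y v : E) :
    (1 - q) * ‖v‖ ≤ ‖L v + y - v‖ + ‖y‖ := by
  have hLv : ‖L v‖ ≤ q * ‖v‖ := L.le_of_opNorm_le hL v
  have hv : ‖v‖ ≤ ‖L v‖ + ‖L v + y - v‖ + ‖y‖ :=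
    calc ‖v‖ = ‖L v - (L v + y - v) + y‖ := by congr 1; abel
      _ ≤ ‖L v - (L v + y - v)‖ + ‖y‖ := norm_add_le _ _
      _ ≤ ‖L v‖ + ‖L v + y - v‖ + ‖y‖ := by gcongr; exact norm_sub_le _ _
  linarith

theorem sq_norm_le_of_opNorm_le {L : E →L[ℝ] E} {q : ℝ} (hq : q < 1) (hL : ‖L‖ ≤ q) (y v : E) :
    ‖v‖ ^ 2 ≤ 2 / (1 - q) ^ 2 * (‖L v + y - v‖ ^ 2 + ‖y‖ ^ 2) := by
  have hq' : 0 < 1 - q := sub_pos.2 hq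
  have h := one_sub_mul_norm_le_of_opNorm_le hL y v
  rw [div_mul_eq_mul_div, le_div_iff₀ (by positivity)]
  nlinarith [mul_self_le_mul_self (by positivity) h, sq_nonneg (‖L v + y - v‖ - ‖y‖)]

end ContinuousLinearMap

namespace Matrix

variable {n : Type*} [Fintype n] [DecidableEq n]

theorem norm_toEuclideanCLM_transpose (A : Matrix n n ℝ) :
    ‖toEuclideanCLM (𝕜 := ℝ) Aᵀ‖ = ‖toEuclideanCLM (𝕜 := ℝ) A‖ := by
  rw [← conjTranspose_eq_transpose_of_trivial, ← star_eq_conjTranspose, map_star,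
    ContinuousLinearMap.star_eq_adjoint, LinearIsometryEquiv.norm_map]

theorem norm_toEuclideanCLM_transpose_mul_le (A B : Matrix n n ℝ) :
    ‖toEuclideanCLM (𝕜 := ℝ) (Aᵀ * Bᵀ)‖ ≤
      ‖toEuclideanCLM (𝕜 := ℝ) A‖ * ‖toEuclideanCLM (𝕜 := ℝ) B‖ := by
  rw [map_mul, ← norm_toEuclideanCLM_transpose A, ← norm_toEuclideanCLM_transpose B]
  exact norm_mul_le _ _

theorem continuous_toEuclideanCLM : Continuous (toEuclideanCLM (𝕜 := ℝ) (n := n)) :=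
  LinearMap.continuous_of_finiteDimensional
    (toEuclideanCLM (𝕜 := ℝ) (n := n)).toAlgEquiv.toLinearMap

end Matrix

section

variable {Ω E : Type*} [MeasurableSpace Ω] {μ : Measure Ω} [IsFiniteMeasure μ]
  [NormedAddCommGroup E]

theorem MeasureTheory.Integrable.sq_norm_sub_const {X : Ω → E} (hX : AEStronglyMeasurable X μ)
    (hint : Integrable (fun ω => ‖X ω‖ ^ 2) μ) (c : E) :
    Integrable (fun ω => ‖X ω - c‖ ^ 2) μ :=
  (memLp_two_iff_integrable_sq_norm (hX.sub aestronglyMeasurable_const)).1 <|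
    ((memLp_two_iff_integrable_sq_norm hX).2 hint).sub (memLp_const c)

end

theorem variance_transfer_bound_general {d : ℕ}
    {Ω : Type*} [MeasurableSpace Ω] (μ : Measure Ω) [IsProbabilityMeasure μ]
    (q σ₁' : ℝ) (hq1 : q < 1) (hσ : 0 ≤ σ₁')
    (M : Ω → Matrix (Fin d) (Fin d) ℝ)
    (hmeas : Measurable M)
    (hsqint : Integrable (fun ω => ‖Matrix.toEuclideanCLM (𝕜 := ℝ) (M ω)‖ ^ 2) μ)
    (Mbar : Matrix (Fin d) (Fin d) ℝ)
    (hvar : ∫ ω, ‖Matrix.toEuclideanCLM (𝕜 := ℝ) (M ω - Mbar)‖ ^ 2 ∂μ ≤ σ₁')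
    (G₁ : Matrix (Fin d) (Fin d) ℝ) (hG₁ : ‖Matrix.toEuclideanCLM (𝕜 := ℝ) G₁‖ ≤ 1)
    (hq : ‖Matrix.toEuclideanCLM (𝕜 := ℝ) (Mbarᵀ * G₁ᵀ)‖ ≤ q)
    (y v : EuclideanSpace ℝ (Fin d)) :
    ∫ ω, ‖Matrix.toEuclideanCLM (𝕜 := ℝ) ((M ω)ᵀ * G₁ᵀ) v + y -
          (Matrix.toEuclideanCLM (𝕜 := ℝ) (Mbarᵀ * G₁ᵀ) v + y)‖ ^ 2 ∂μ ≤
      2 * σ₁' / (1 - q) ^ 2 *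
          ‖Matrix.toEuclideanCLM (𝕜 := ℝ) (Mbarᵀ * G₁ᵀ) v + y - v‖ ^ 2 +
        2 * σ₁' / (1 - q) ^ 2 * ‖y‖ ^ 2 := by
  set T := Matrix.toEuclideanCLM (𝕜 := ℝ) (n := Fin d)
  have hpoint : ∀ ω, ‖T ((M ω)ᵀ * G₁ᵀ) v + y - (T (Mbarᵀ * G₁ᵀ) v + y)‖ ^ 2 ≤
      ‖T (M ω - Mbar)‖ ^ 2 * ‖v‖ ^ 2 := fun ω => by
    rw [add_sub_add_right_eq_sub, ← _root_.sub_apply, ← map_sub, ← sub_mul,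
      ← transpose_sub, ← mul_pow]
    gcongr
    refine ContinuousLinearMap.le_of_opNorm_le _ ?_ v
    exact (norm_toEuclideanCLM_transpose_mul_le _ _).trans
      (mul_le_of_le_one_right (norm_nonneg _) hG₁)
  have hint : Integrable (fun ω => ‖T (M ω - Mbar)‖ ^ 2) μ := by
    simp only [map_sub]
    borelize (EuclideanSpace ℝ (Fin d) →L[ℝ] EuclideanSpace ℝ (Fin d))
    exact hsqint.sq_norm_sub_const
      (continuous_toEuclideanCLM.measurable.comp hmeas).aestronglyMeasurable _
  calc _ ≤ ∫ ω, ‖T (M ω - Mbar)‖ ^ 2 * ‖v‖ ^ 2 ∂μ :=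
        integral_mono_of_nonneg (.of_forall fun _ => by positivity) (hint.mul_const _)
          (.of_forall hpoint)
    _ = (∫ ω, ‖T (M ω - Mbar)‖ ^ 2 ∂μ) * ‖v‖ ^ 2 := integral_mul_const _ _
    _ ≤ σ₁' * (2 / (1 - q) ^ 2 * (‖T (Mbarᵀ * G₁ᵀ) v + y - v‖ ^ 2 + ‖y‖ ^ 2)) :=
        mul_le_mul hvar (ContinuousLinearMap.sq_norm_le_of_opNorm_le hq1 hq y v) (by positivity) hσ
    _ = _ := by ring

/-- Variance transfer bound for the stochastic linear-system operator
(established in the proof of Lemma D.3):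
`E[‖MᵀG₁ᵀ v + y − Ψ(v)‖²] ≤ (2σ₁'/(1−q)²)·‖Ψ(v) − v‖² + (2σ₁'/(1−q)²)·‖y‖²`,
where `Ψ(v) = M̄ᵀG₁ᵀ v + y`. -/
theorem variance_transfer_bound {d : ℕ}
    {Ω : Type*} [MeasurableSpace Ω] (μ : Measure Ω) [IsProbabilityMeasure μ]
    (q σ₁' : ℝ) (hq0 : 0 ≤ q) (hq1 : q < 1) (hσ : 0 ≤ σ₁')
    (M : Ω → Matrix (Fin d) (Fin d) ℝ)
    (hmeas : Measurable M)
    (hsqint : Integrable (fun ω => ‖Matrix.toEuclideanCLM (𝕜 := ℝ) (M ω)‖ ^ 2) μ)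
    (Mbar : Matrix (Fin d) (Fin d) ℝ)
    (hmean : ∀ a b, ∫ ω, M ω a b ∂μ = Mbar a b)
    (hvar : ∫ ω, ‖Matrix.toEuclideanCLM (𝕜 := ℝ) (M ω - Mbar)‖ ^ 2 ∂μ ≤ σ₁')
    (G₁ : Matrix (Fin d) (Fin d) ℝ) (hG₁ : ‖Matrix.toEuclideanCLM (𝕜 := ℝ) G₁‖ ≤ 1)
    (hq : ‖Matrix.toEuclideanCLM (𝕜 := ℝ) (Mbarᵀ * G₁ᵀ)‖ ≤ q)
    (y v : EuclideanSpace ℝ (Fin d)) :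
    ∫ ω, ‖Matrix.toEuclideanCLM (𝕜 := ℝ) ((M ω)ᵀ * G₁ᵀ) v + y -
          (Matrix.toEuclideanCLM (𝕜 := ℝ) (Mbarᵀ * G₁ᵀ) v + y)‖ ^ 2 ∂μ ≤
      2 * σ₁' / (1 - q) ^ 2 *
          ‖Matrix.toEuclideanCLM (𝕜 := ℝ) (Mbarᵀ * G₁ᵀ) v + y - v‖ ^ 2 +
        2 * σ₁' / (1 - q) ^ 2 * ‖y‖ ^ 2 :=
  variance_transfer_bound_general μ q σ₁' hq1 hσ M hmeas hsqint Mbar hvar G₁ hG₁ hq y v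
end
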